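/- arXiv:2111.03595 — 7 statements merged into one kernel-verified Lean document; each statement's English description precedes it below -/
import Mathlib

section
/- For every integer n ≥ 1 and every real ρ with 0 < ρ ≤ 1, the tail of the exponential series satisfies ∑_{k=n}^∞ (nρ²)^k / k! ≤ (ρ^{2n} e^n / √(2πn)) · (1 + 1/n)/(1 - ρ² + 1/n). -/
lemma stirling_lb (n : ℕ) (hn : 1 ≤ n) :
    Real.sqrt (2 * Real.pi * n) * ((n : ℝ) / Real.exp 1) ^ n ≤ n.factorial := by
  have h1 : Real.sqrt Real.pi ≤ Stirling.stirlingSeq n := by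
    obtain ⟨m, rfl⟩ : ∃ m, n = m + 1 := ⟨n - 1, (Nat.succ_pred_eq_of_pos hn).symm⟩
    have := Stirling.stirlingSeq'_antitone.le_of_tendsto
      (Stirling.tendsto_stirlingSeq_sqrt_pi.comp (Filter.tendsto_add_atTop_nat 1)) m
    simpa using this
  have hn0 : (0:ℝ) < n := by exact_mod_cast hn
  have hpos : 0 < Real.sqrt (2 * n) * ((n : ℝ) / Real.exp 1) ^ n := by positivity
  rw [Stirling.stirlingSeq, le_div_iff₀ hpos] at h1
  calc Real.sqrt (2 * Real.pi * n) * ((n : ℝ) / Real.exp 1) ^ n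
      = Real.sqrt Real.pi * (Real.sqrt (2 * n) * ((n : ℝ) / Real.exp 1) ^ n) := by
        rw [← mul_assoc, ← Real.sqrt_mul Real.pi_pos.le]
        ring_nf
    _ ≤ n.factorial := h1

theorem stmt_1 (n : ℕ) (hn : 1 ≤ n) (ρ : ℝ) (hρ0 : 0 < ρ) (hρ1 : ρ ≤ 1) :
    ∑' k : ℕ, ((n : ℝ) * ρ ^ 2) ^ (n + k) / (Nat.factorial (n + k)) ≤
      ρ ^ (2 * n) * Real.exp n / Real.sqrt (2 * Real.pi * n) *
        ((1 + 1 / n) / (1 - ρ ^ 2 + 1 / n)) := by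
  have hn0 : (0:ℝ) < n := by exact_mod_cast hn
  set x : ℝ := (n : ℝ) * ρ ^ 2 with hx
  have hρ2 : ρ ^ 2 ≤ 1 := by nlinarith
  have hx0 : 0 < x := by positivity
  have hxn : x ≤ n := by nlinarith
  have hxn1 : x < n + 1 := by linarith
  have hr0 : 0 ≤ x / (n + 1) := by positivity
  have hr1 : x / (n + 1) < 1 := by
    rw [div_lt_one (by linarith)]; exact hxn1
  -- termwise bound
  have hterm : ∀ k : ℕ, x ^ (n + k) / (Nat.factorial (n + k)) ≤
      x ^ n / n.factorial * (x / (n + 1)) ^ k := by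
    intro k
    have hfac : (n.factorial : ℝ) * (n + 1) ^ k ≤ (Nat.factorial (n + k) : ℝ) := by
      have := Nat.factorial_mul_pow_le_factorial (m := n) (n := k)
      exact_mod_cast this
    have h1 : x ^ (n + k) / (Nat.factorial (n + k)) ≤
        x ^ (n + k) / ((n.factorial : ℝ) * (n + 1) ^ k) := by
      apply div_le_div_of_nonneg_left (by positivity) (by positivity) hfac
    refine h1.trans_eq ?_
    rw [pow_add, div_pow]
    field_simp
  -- summability
  have hsumf : Summable (fun k : ℕ => x ^ (n + k) / (Nat.factorial (n + k))) := by
    have := Real.summable_pow_div_factorial x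
    exact (summable_nat_add_iff n).mpr this |>.congr (fun k => by rw [add_comm])
  have hsumg : Summable (fun k : ℕ => x ^ n / n.factorial * (x / (n + 1)) ^ k) :=
    (summable_geometric_of_lt_one hr0 hr1).mul_left _
  have hle : ∑' k : ℕ, x ^ (n + k) / (Nat.factorial (n + k)) ≤
      ∑' k : ℕ, x ^ n / n.factorial * (x / (n + 1)) ^ k :=
    Summable.tsum_le_tsum hterm hsumf hsumg
  rw [tsum_mul_left, tsum_geometric_of_lt_one hr0 hr1] at hle
  refine hle.trans ?_
  -- rewrite the geometric factor
  have hd : (0:ℝ) < n + 1 - x := by linarith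
  have e1 : (1 - x / (n + 1))⁻¹ = (n + 1) / (n + 1 - x) := by
    have h01 : (0:ℝ) < 1 - x / (n + 1) := by linarith
    rw [← one_div, div_eq_div_iff h01.ne' hd.ne']
    field_simp
  have hden : (0:ℝ) < 1 - ρ ^ 2 + 1 / n := by
    have : (0:ℝ) < 1 / n := by positivity
    linarith
  have e2 : (1 + 1 / (n:ℝ)) / (1 - ρ ^ 2 + 1 / n) = (n + 1) / (n + 1 - x) := by
    rw [div_eq_div_iff hden.ne' hd.ne', hx]
    have hnne : (n:ℝ) ≠ 0 := hn0.ne'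
    field_simp
    ring_nf
  rw [e1, e2]
  have key : x ^ n / n.factorial ≤ ρ ^ (2 * n) * Real.exp n / Real.sqrt (2 * Real.pi * n) := by
    have hst := stirling_lb n hn
    have hs : 0 < Real.sqrt (2 * Real.pi * n) := by positivity
    have hfac : (0:ℝ) < n.factorial := by exact_mod_cast n.factorial_pos
    rw [div_le_div_iff₀ hfac hs]
    have hxpow : x ^ n = (n:ℝ) ^ n * ρ ^ (2 * n) := by
      rw [hx, mul_pow, pow_mul, ← pow_mul, mul_comm 2 n, pow_mul]
    rw [hxpow]
    have hexp : Real.exp (n : ℝ) = (Real.exp 1) ^ n := by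
      rw [← Real.exp_nat_mul]; ring_nf
    have h2 : Real.sqrt (2 * Real.pi * n) * ((n : ℝ) ^ n / (Real.exp 1) ^ n) ≤ n.factorial := by
      rw [← div_pow]; exact hst
    have hρp : 0 ≤ ρ ^ (2 * n) := by positivity
    have h3 : Real.sqrt (2 * Real.pi * n) * (n:ℝ) ^ n ≤ n.factorial * (Real.exp 1) ^ n := by
      rw [← mul_div_assoc] at h2
      exact (div_le_iff₀ (by positivity)).mp h2
    rw [hexp]
    nlinarith [mul_le_mul_of_nonneg_right h3 hρp]
  have hB : 0 < ((n:ℝ) + 1) / (n + 1 - x) := by positivity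
  exact mul_le_mul_of_nonneg_right key hB.le
end

section
/- For every integer n ≥ 1 and every real ρ ≥ 1, the partial exponential sum satisfies ∑_{k=0}^{n-1} (nρ²)^k / k! ≤ (ρ^{2n} e^n / √(2πn)) · 1/(ρ² - 1 + 1/n). -/
/-!
Writing `x = nρ²`, the sum `∑_{k<n} x^k/k! * (x - k)` telescopes to `n x^n/n!`, and each factor
`x - k` is at least `x + 1 - n = n(ρ² - 1 + 1/n)`. This bounds the partial sum by
`x^n/n! / (ρ² - 1 + 1/n)`, and Stirling's lower bound `n! ≥ √(2πn) (n/e)^n` finishes.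
-/

open Finset Real Nat

theorem sum_range_pow_div_factorial_mul_sub {K : Type*} [Field K] [CharZero K] (x : K) (n : ℕ) :
    ∑ k ∈ range n, x ^ k / k ! * (x - k) = n * x ^ n / n ! := by
  induction n with
  | zero => simp
  | succ n ih =>
    rw [sum_range_succ, ih, factorial_succ]
    push_cast
    field_simp
    ring

theorem sub_mul_sum_range_pow_div_factorial_le {x : ℝ} (hx : 0 ≤ x) (n : ℕ) :
    (x + 1 - n) * ∑ k ∈ range n, x ^ k / k ! ≤ n * x ^ n / n ! := by
  rw [← sum_range_pow_div_factorial_mul_sub, mul_sum]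
  refine sum_le_sum fun k hk => ?_
  have hkn : (k : ℝ) + 1 ≤ n := by exact_mod_cast mem_range.mp hk
  rw [mul_comm]
  exact mul_le_mul_of_nonneg_left (by linarith) (by positivity)

theorem pow_div_factorial_le_exp_div_sqrt {n : ℕ} (hn : n ≠ 0) :
    (n : ℝ) ^ n / n ! ≤ exp n / √(2 * π * n) := by
  have hsqrt : 0 < √(2 * π * n) := by positivity
  rw [div_le_div_iff₀ (by positivity) hsqrt, ← exp_one_pow]
  have := Stirling.le_factorial_stirling n
  rw [div_pow] at this
  have he : 0 < exp 1 ^ n := by positivity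
  calc (n : ℝ) ^ n * √(2 * π * n) = √(2 * π * n) * ((n : ℝ) ^ n / exp 1 ^ n) * exp 1 ^ n := by
        field_simp
    _ ≤ n ! * exp 1 ^ n := by gcongr
    _ = _ := mul_comm _ _

theorem stmt_2 (n : ℕ) (hn : 1 ≤ n) (ρ : ℝ) (hρ : 1 ≤ ρ) :
    ∑ k ∈ Finset.range n, ((n : ℝ) * ρ ^ 2) ^ k / (Nat.factorial k) ≤
      ρ ^ (2 * n) * Real.exp n / Real.sqrt (2 * Real.pi * n) *
        (1 / (ρ ^ 2 - 1 + 1 / n)) := by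
  have hn0 : (0 : ℝ) < n := by exact_mod_cast hn
  have hd : 0 < ρ ^ 2 - 1 + 1 / n := by
    have := one_le_pow₀ (n := 2) hρ
    positivity
  have hsum := sub_mul_sum_range_pow_div_factorial_le (x := n * ρ ^ 2) (by positivity) n
  rw [show (n : ℝ) * ρ ^ 2 + 1 - n = n * (ρ ^ 2 - 1 + 1 / n) by field_simp; ring, mul_assoc,
    mul_div_assoc] at hsum
  have hstir := pow_div_factorial_le_exp_div_sqrt (Nat.one_le_iff_ne_zero.mp hn)
  rw [mul_one_div, le_div_iff₀ hd, mul_comm]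
  calc _ ≤ ((n : ℝ) * ρ ^ 2) ^ n / n ! := le_of_mul_le_mul_left hsum hn0
    _ = ρ ^ (2 * n) * ((n : ℝ) ^ n / n !) := by rw [mul_pow, pow_mul]; ring
    _ ≤ ρ ^ (2 * n) * (exp n / √(2 * π * n)) := by gcongr
    _ = _ := by ring
end

section
/- For every integer n ≥ 1 and real ρ ≤ 1, ∑_{k=n}^∞ (nρ²)^k/k! ≤ ((nρ²)^n/n!) · (n+1)/(n(1-ρ²)+1). -/
theorem stmt_3 (n : ℕ) (hn : 1 ≤ n) (ρ : ℝ) (hρ0 : 0 ≤ ρ) (hρ1 : ρ ≤ 1) :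
    ∑' k : ℕ, ((n : ℝ) * ρ ^ 2) ^ (n + k) / (Nat.factorial (n + k)) ≤
      ((n : ℝ) * ρ ^ 2) ^ n / (Nat.factorial n) * ((n + 1) / (n * (1 - ρ ^ 2) + 1)) := by
  set x : ℝ := (n : ℝ) * ρ ^ 2 with hxdef
  have hn1 : (1 : ℝ) ≤ (n : ℝ) := by exact_mod_cast hn
  have hx0 : 0 ≤ x := by positivity
  have hxn : x ≤ (n : ℝ) := by
    have h1 : ρ ^ 2 ≤ 1 := by nlinarith
    calc x ≤ (n : ℝ) * 1 := by
            apply mul_le_mul_of_nonneg_left h1 (by positivity)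
      _ = (n : ℝ) := mul_one _
  set r : ℝ := x / ((n : ℝ) + 1) with hrdef
  have hr0 : 0 ≤ r := by positivity
  have hr1 : r < 1 := by
    rw [hrdef, div_lt_one (by positivity)]; linarith
  have hfactN : ∀ k : ℕ, Nat.factorial n * (n + 1) ^ k ≤ Nat.factorial (n + k) := by
    intro k
    induction k with
    | zero => simp
    | succ k ih =>
      have : Nat.factorial n * (n + 1) ^ (k + 1) =
          Nat.factorial n * (n + 1) ^ k * (n + 1) := by ring
      rw [this]
      calc Nat.factorial n * (n + 1) ^ k * (n + 1)
          ≤ Nat.factorial (n + k) * (n + 1) := Nat.mul_le_mul_right _ ih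
        _ ≤ Nat.factorial (n + k) * (n + k + 1) :=
            Nat.mul_le_mul_left _ (by omega)
        _ = Nat.factorial (n + (k + 1)) := by
            rw [show n + (k+1) = (n + k) + 1 by omega, Nat.factorial_succ]; ring
  have hterm : ∀ k : ℕ, x ^ (n + k) / (Nat.factorial (n + k) : ℝ) ≤
      x ^ n / (Nat.factorial n : ℝ) * r ^ k := by
    intro k
    have hfR : (Nat.factorial n : ℝ) * ((n : ℝ) + 1) ^ k ≤ (Nat.factorial (n + k) : ℝ) := by
      have := hfactN k
      calc (Nat.factorial n : ℝ) * ((n : ℝ) + 1) ^ k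
          = ((Nat.factorial n * (n + 1) ^ k : ℕ) : ℝ) := by push_cast; ring
        _ ≤ (Nat.factorial (n + k) : ℝ) := by exact_mod_cast this
    have hrw : x ^ n / (Nat.factorial n : ℝ) * r ^ k =
        x ^ (n + k) / ((Nat.factorial n : ℝ) * ((n : ℝ) + 1) ^ k) := by
      rw [hrdef, div_pow, pow_add]
      field_simp
    rw [hrw]
    apply div_le_div_of_nonneg_left (by positivity) (by positivity) hfR
  have hsumR : Summable (fun k : ℕ => x ^ n / (Nat.factorial n : ℝ) * r ^ k) :=
    (summable_geometric_of_lt_one hr0 hr1).mul_left _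
  have hsumL : Summable (fun k : ℕ => x ^ (n + k) / (Nat.factorial (n + k) : ℝ)) :=
    Summable.of_nonneg_of_le (fun k => by positivity) hterm hsumR
  calc ∑' k : ℕ, x ^ (n + k) / (Nat.factorial (n + k) : ℝ)
      ≤ ∑' k : ℕ, x ^ n / (Nat.factorial n : ℝ) * r ^ k :=
        Summable.tsum_le_tsum hterm hsumL hsumR
    _ = x ^ n / (Nat.factorial n : ℝ) * (1 - r)⁻¹ := by
        rw [tsum_mul_left, tsum_geometric_of_lt_one hr0 hr1]
    _ = x ^ n / (Nat.factorial n : ℝ) * (((n : ℝ) + 1) / ((n : ℝ) * (1 - ρ ^ 2) + 1)) := by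
        congr 1
        have hd : (n : ℝ) * (1 - ρ ^ 2) + 1 = ((n : ℝ) + 1) - x := by
          rw [hxdef]; ring
        have hpos : (0 : ℝ) < ((n : ℝ) + 1) - x := by linarith
        rw [hd, hrdef]
        field_simp
end

section
/- For every integer n ≥ 1 and real ρ ≥ 1, ∑_{k=0}^{n-1} (nρ²)^k/k! ≤ ((nρ²)^n/n!) · 1/(ρ² - (n-1)/n). -/
open Finset Nat

lemma fact_aux (k d : ℕ) : (k + d)! ≤ k ! * (k + d) ^ d := by
  induction d with
  | zero => simp
  | succ d ih =>
    have h1 : (k + (d+1))! = (k + d + 1) * (k + d)! := by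
      rw [show k + (d+1) = (k+d) + 1 from rfl, Nat.factorial_succ]
    rw [h1]
    calc (k+d+1) * (k+d)! ≤ (k+d+1) * (k ! * (k+d)^d) := Nat.mul_le_mul_left _ ih
      _ ≤ (k+d+1) * (k ! * (k+d+1)^d) :=
          Nat.mul_le_mul_left _ (Nat.mul_le_mul_left _ (Nat.pow_le_pow_left (Nat.le_succ _) d))
      _ = k ! * (k + (d+1)) ^ (d+1) := by ring

lemma geom_bound {r : ℝ} (h0 : 0 ≤ r) (h1 : r < 1) (N : ℕ) :
    ∑ i ∈ Finset.range N, r ^ i ≤ 1 / (1 - r) := by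
  rw [geom_sum_eq h1.ne N]
  have key : (r ^ N - 1) / (r - 1) = (1 - r ^ N) / (1 - r) := by
    rw [div_eq_div_iff (by linarith) (by linarith)]; ring
  rw [key, div_le_div_iff₀ (by linarith) (by linarith)]
  nlinarith [pow_nonneg h0 N]

theorem stmt_4 (n : ℕ) (hn : 1 ≤ n) (ρ : ℝ) (hρ : 1 ≤ ρ) :
    ∑ k ∈ Finset.range n, ((n : ℝ) * ρ ^ 2) ^ k / (Nat.factorial k) ≤
      ((n : ℝ) * ρ ^ 2) ^ n / (Nat.factorial n) * (1 / (ρ ^ 2 - ((n : ℝ) - 1) / n)) := by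
  obtain ⟨m, rfl⟩ : ∃ m, n = m + 1 := ⟨n - 1, (Nat.succ_pred_eq_of_pos hn).symm⟩
  have hρ2 : (1:ℝ) ≤ ρ ^ 2 := one_le_pow₀ hρ
  set x : ℝ := ((m + 1 : ℕ) : ℝ) * ρ ^ 2 with hxdef
  have hm1 : (0:ℝ) < (m:ℝ) + 1 := by positivity
  have hcast : ((m + 1 : ℕ) : ℝ) = (m:ℝ) + 1 := by push_cast; ring
  have hx1 : (m:ℝ) + 1 ≤ x := by
    rw [hxdef, hcast]; nlinarith
  have hx0 : (0:ℝ) < x := lt_of_lt_of_le hm1 hx1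
  set r : ℝ := (m:ℝ) / x with hrdef
  have hr0 : 0 ≤ r := div_nonneg (Nat.cast_nonneg m) hx0.le
  have hr1 : r < 1 := (div_lt_one hx0).2 (by linarith)
  -- termwise bound
  have hterm : ∀ k ∈ Finset.range (m+1),
      x ^ k / (Nat.factorial k) ≤ x ^ m / (Nat.factorial m) * r ^ (m - k) := by
    intro k hk
    have hk' : k ≤ m := Nat.lt_succ_iff.mp (Finset.mem_range.mp hk)
    have hfact : (Nat.factorial m : ℝ) ≤ (Nat.factorial k : ℝ) * (m:ℝ) ^ (m - k) := by
      have := fact_aux k (m - k)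
      rw [Nat.add_sub_cancel' hk'] at this
      exact_mod_cast this
    have hxk : x ^ m = x ^ k * x ^ (m - k) := by
      rw [← pow_add, Nat.add_sub_cancel' hk']
    have h1 : x ^ m / (Nat.factorial m) * r ^ (m - k)
        = x ^ k * ((m:ℝ) ^ (m - k) / (Nat.factorial m)) := by
      rw [hrdef, div_pow, hxk]
      field_simp
    rw [h1, div_eq_mul_one_div]
    apply mul_le_mul_of_nonneg_left _ (by positivity)
    rw [div_le_div_iff₀ (by positivity) (by positivity)]
    calc 1 * (Nat.factorial m : ℝ) = (Nat.factorial m : ℝ) := one_mul _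
      _ ≤ (Nat.factorial k : ℝ) * (m:ℝ) ^ (m-k) := hfact
      _ = (m:ℝ) ^ (m-k) * (Nat.factorial k : ℝ) := mul_comm _ _
  calc ∑ k ∈ Finset.range (m+1), x ^ k / (Nat.factorial k)
      ≤ ∑ k ∈ Finset.range (m+1), x ^ m / (Nat.factorial m) * r ^ (m - k) :=
        Finset.sum_le_sum hterm
    _ = x ^ m / (Nat.factorial m) * ∑ k ∈ Finset.range (m+1), r ^ (m - k) := by
        rw [Finset.mul_sum]
    _ = x ^ m / (Nat.factorial m) * ∑ k ∈ Finset.range (m+1), r ^ k := by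
        congr 1
        rw [← Finset.sum_range_reflect (fun k => r ^ k) (m+1)]
        simp
    _ ≤ x ^ m / (Nat.factorial m) * (1 / (1 - r)) := by
        apply mul_le_mul_of_nonneg_left (geom_bound hr0 hr1 (m+1)) (by positivity)
    _ = x ^ (m+1) / (Nat.factorial (m+1)) * (1 / (ρ ^ 2 - (((m+1 : ℕ) : ℝ) - 1) / ((m+1 : ℕ) : ℝ))) := by
        have h1r : 1 - r = (x - (m:ℝ)) / x := by
          rw [hrdef]; field_simp
        have hd : ρ ^ 2 - (((m+1 : ℕ) : ℝ) - 1) / ((m+1 : ℕ) : ℝ) = (x - (m:ℝ)) / ((m:ℝ)+1) := by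
          rw [hcast, hxdef, hcast]; field_simp; ring
        have hxm : x - (m:ℝ) > 0 := by linarith
        have hfm : (0:ℝ) < (Nat.factorial m : ℝ) := by positivity
        have h2 : x ≠ 0 := hx0.ne'
        have h3 : x - (m:ℝ) ≠ 0 := hxm.ne'
        have h4 : ((m:ℝ)+1) ≠ 0 := hm1.ne'
        have h5 : (Nat.factorial m : ℝ) ≠ 0 := hfm.ne'
        rw [h1r, hd, Nat.factorial_succ]
        push_cast
        field_simp
        ring
end

section
/- Let μ_n = (1/n)∑_{j=1}^n δ_{λ_j} be the empirical measure of any n points λ_1,…,λ_n in ℂ and μ_∞ be the uniform probability measure on the closed unit disk in ℂ. Then for every p ≥ 1, the p-Wasserstein distance satisfies W_p(μ_n, μ_∞) ≥ 1/(3√n). -/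
/-!
Put a ball of radius `r = 1 / (2√n)` around each of the `n` atoms. Their union has
circular-law mass at most `n r² = 1/4`, so every coupling must move mass at least `3/4`
by a distance greater than `r`. Markov's inequality then gives
`W_p ≥ r (3/4)^(1/p) ≥ 3r/4 = 3 / (8√n)`.
-/

open MeasureTheory

/-- The `p`-Wasserstein distance between two measures on `ℂ`, as an extended real. -/
noncomputable def wassersteinDist (p : ℝ) (μ ν : Measure ℂ) : ENNReal :=
  ⨅ q : {q : Measure (ℂ × ℂ) // q.map Prod.fst = μ ∧ q.map Prod.snd = ν},
    (∫⁻ x, (ENNReal.ofReal (‖x.1 - x.2‖)) ^ p ∂(q : Measure (ℂ × ℂ))) ^ (1 / p)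

/-- The uniform probability measure on the closed unit disk (the circular law). -/
noncomputable def circularLaw : Measure ℂ :=
  (volume (Metric.closedBall (0 : ℂ) 1))⁻¹ • volume.restrict (Metric.closedBall (0 : ℂ) 1)

open Metric Set

section Coupling

variable {X : Type*} [PseudoMetricSpace X] [MeasurableSpace X]

theorem measure_univ_le_coupling_dist_gt {q : Measure (X × X)} {μ ν : Measure X}
    (hq₁ : q.map Prod.fst = μ) (hq₂ : q.map Prod.snd = ν) (s : Set X) (r : ℝ) :
    ν univ ≤ q {x | r < dist x.1 x.2} + μ sᶜ + ν (⋃ c ∈ s, closedBall c r) := by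
  have hcover : univ ⊆ {x : X × X | r < dist x.1 x.2} ∪ Prod.fst ⁻¹' sᶜ ∪
      Prod.snd ⁻¹' (⋃ c ∈ s, closedBall c r) := by
    rintro ⟨a, b⟩ -
    by_cases hab : r < dist a b
    · exact Or.inl (Or.inl hab)
    by_cases ha : a ∈ s
    · exact Or.inr (mem_biUnion ha (mem_closedBall'.2 (not_lt.1 hab)))
    · exact Or.inl (Or.inr ha)
  calc ν univ = q univ := by
        rw [← hq₂, Measure.map_apply measurable_snd MeasurableSet.univ]; rfl
    _ ≤ q {x | r < dist x.1 x.2} + q (Prod.fst ⁻¹' sᶜ) +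
        q (Prod.snd ⁻¹' (⋃ c ∈ s, closedBall c r)) :=
      (measure_mono hcover).trans <| (measure_union_le _ _).trans <| by
        gcongr; exact measure_union_le _ _
    _ ≤ _ := by
      rw [← hq₁, ← hq₂]
      gcongr <;> exact Measure.le_map_apply (by fun_prop) _

end Coupling

theorem sum_dirac_apply_compl_range {α ι : Type*} [MeasurableSpace α]
    [MeasurableSingletonClass α] [Fintype ι] (x : ι → α) :
    (∑ i, Measure.dirac (x i)) (range x)ᶜ = 0 := by
  simp [Measure.dirac_apply]

theorem le_wassersteinDist {p r : ℝ} (hp : 0 < p) {μ ν : Measure ℂ} {m : ENNReal}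
    (hm : ∀ q : Measure (ℂ × ℂ), q.map Prod.fst = μ → q.map Prod.snd = ν →
      m ≤ q {x | r ≤ ‖x.1 - x.2‖}) :
    ENNReal.ofReal r * m ^ (1 / p) ≤ wassersteinDist p μ ν := by
  refine le_iInf fun ⟨q, hq₁, hq₂⟩ => ?_
  have hmarkov : ENNReal.ofReal r ^ p * q {x | r ≤ ‖x.1 - x.2‖} ≤
      ∫⁻ x, ENNReal.ofReal ‖x.1 - x.2‖ ^ p ∂q := by
    refine le_trans ?_ (mul_meas_ge_le_lintegral₀ (by fun_prop) (ENNReal.ofReal r ^ p))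
    gcongr with x
    exact fun h => ENNReal.rpow_le_rpow (ENNReal.ofReal_le_ofReal h) hp.le
  calc ENNReal.ofReal r * m ^ (1 / p) = (ENNReal.ofReal r ^ p * m) ^ (1 / p) := by
        rw [ENNReal.mul_rpow_of_nonneg _ _ (by positivity), ← ENNReal.rpow_mul,
          mul_one_div_cancel hp.ne', ENNReal.rpow_one]
    _ ≤ _ := ENNReal.rpow_le_rpow ((mul_le_mul_right (hm q hq₁ hq₂) _).trans hmarkov)
        (by positivity)

theorem volume_closedBall_zero_one : volume (closedBall (0 : ℂ) 1) = NNReal.pi := by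
  simp [Complex.volume_closedBall]

instance isProbabilityMeasure_circularLaw : IsProbabilityMeasure circularLaw where
  measure_univ := by
    rw [circularLaw, Measure.smul_apply, Measure.restrict_apply MeasurableSet.univ,
      univ_inter, volume_closedBall_zero_one, smul_eq_mul,
      ENNReal.inv_mul_cancel (by simp [NNReal.pi_ne_zero]) ENNReal.coe_ne_top]

theorem circularLaw_closedBall_le (c : ℂ) (r : ℝ) :
    circularLaw (closedBall c r) ≤ ENNReal.ofReal r ^ 2 := by
  rw [circularLaw, Measure.smul_apply, Measure.restrict_apply measurableSet_closedBall,
    volume_closedBall_zero_one, smul_eq_mul]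
  calc (NNReal.pi : ENNReal)⁻¹ * volume (closedBall c r ∩ closedBall 0 1)
      ≤ (NNReal.pi : ENNReal)⁻¹ * volume (closedBall c r) := by
        gcongr; exact inter_subset_left
    _ = ENNReal.ofReal r ^ 2 := by
      rw [Complex.volume_closedBall, mul_comm, mul_assoc,
        ENNReal.mul_inv_cancel (by simp [NNReal.pi_ne_zero]) ENNReal.coe_ne_top, mul_one]

theorem circularLaw_iUnion_closedBall_le {ι : Type*} [Fintype ι] (c : ι → ℂ) {r : ℝ}
    (hr : 0 ≤ r) :
    circularLaw (⋃ i, closedBall (c i) r) ≤ ENNReal.ofReal (Fintype.card ι * r ^ 2) := by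
  calc circularLaw (⋃ i, closedBall (c i) r) ≤ ∑ i, circularLaw (closedBall (c i) r) :=
        measure_iUnion_fintype_le _ _
    _ ≤ ∑ _i : ι, ENNReal.ofReal r ^ 2 :=
        Finset.sum_le_sum fun i _ => circularLaw_closedBall_le _ _
    _ = _ := by
      rw [Finset.sum_const, Finset.card_univ, nsmul_eq_mul, ENNReal.ofReal_mul (by positivity),
        ENNReal.ofReal_natCast, ENNReal.ofReal_pow hr]

theorem one_sub_le_measure_norm_sub_ge_of_coupling_circularLaw {ι : Type*} [Fintype ι]
    (c : ENNReal) (l : ι → ℂ) {r : ℝ} (hr : 0 ≤ r) {q : Measure (ℂ × ℂ)}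
    (hq₁ : q.map Prod.fst = c • ∑ i, Measure.dirac (l i))
    (hq₂ : q.map Prod.snd = circularLaw) :
    1 - ENNReal.ofReal (Fintype.card ι * r ^ 2) ≤ q {x | r ≤ ‖x.1 - x.2‖} := by
  have h := measure_univ_le_coupling_dist_gt hq₁ hq₂ (range l) r
  rw [measure_univ, Measure.smul_apply, sum_dirac_apply_compl_range, smul_zero, add_zero,
    biUnion_range] at h
  rw [tsub_le_iff_right]
  refine h.trans (add_le_add (measure_mono fun x (hx : r < dist x.1 x.2) => ?_)
    (circularLaw_iUnion_closedBall_le l hr))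
  exact (dist_eq_norm x.1 x.2 ▸ hx).le

theorem stmt_5 (n : ℕ) (hn : 1 ≤ n) (l : Fin n → ℂ) (p : ℝ) (hp : 1 ≤ p) :
    wassersteinDist p ((n : ENNReal)⁻¹ • ∑ j : Fin n, Measure.dirac (l j)) circularLaw ≥
      ENNReal.ofReal (1 / (3 * Real.sqrt n)) := by
  have hsqrt : 0 < Real.sqrt n := Real.sqrt_pos.2 (by exact_mod_cast hn)
  set r : ℝ := 1 / (2 * Real.sqrt n)
  have hmass : ENNReal.ofReal (3 / 4) = 1 - ENNReal.ofReal (Fintype.card (Fin n) * r ^ 2) := by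
    rw [Fintype.card_fin, div_pow, mul_pow, Real.sq_sqrt (Nat.cast_nonneg n),
      ← ENNReal.ofReal_one, ← ENNReal.ofReal_sub _ (by positivity)]
    congr 1
    field_simp
    norm_num
  have hbound : 1 / (3 * Real.sqrt n) ≤ r * (3 / 4) ^ (1 / p) := by
    have h34 : (3 / 4 : ℝ) ≤ (3 / 4) ^ (1 / p) :=
      Real.self_le_rpow_of_le_one (by norm_num) (by norm_num) ((div_le_one (by linarith)).2 hp)
    calc 1 / (3 * Real.sqrt n) ≤ r * (3 / 4) := by
          rw [div_mul_eq_mul_div, one_mul, div_le_div_iff₀ (by positivity) (by positivity)]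
          nlinarith
      _ ≤ _ := by gcongr
  calc ENNReal.ofReal (1 / (3 * Real.sqrt n))
      ≤ ENNReal.ofReal r * ENNReal.ofReal (3 / 4) ^ (1 / p) := by
        rw [ENNReal.ofReal_rpow_of_nonneg (by norm_num) (by positivity),
          ← ENNReal.ofReal_mul (by positivity)]
        exact ENNReal.ofReal_le_ofReal hbound
    _ ≤ _ := le_wassersteinDist (by linarith) fun q hq₁ hq₂ =>
        hmass ▸
          one_sub_le_measure_norm_sub_ge_of_coupling_circularLaw _ l (by positivity) hq₁ hq₂
end

section
/- For every n ≥ 1: ∫_ℂ exp(-n(|z|² - 1 - log(|z|²))) dz = 2π ∫_0^∞ e^{-n(ρ²-1-log ρ²)} ρ dρ, and this tends to 0 at rate n^{-1/2}; more precisely √n · ∫_ℂ exp(-n(|z|²-1-log|z|²)) dz → 2π·√(2π)/2 = π√(2π) as n → ∞. -/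
/-!
In polar coordinates the integral is `2π ∫₀^∞ e^{-n(ρ² - 1 - log ρ²)} ρ dρ = 2π eⁿ ∫₀^∞ ρ^{2n+1} e^{-nρ²} dρ`,
a Gamma integral with the exact value `π eⁿ n! / n^{n+1}`. Hence `√n` times it equals
`π √2 · n! / (√(2n) (n/e)ⁿ)`, which is `π √2` times the Stirling sequence, and that tends to `√π`.
-/

open MeasureTheory Filter

open Real Set

theorem Complex.integral_comp_norm (f : ℝ → ℝ) :
    ∫ z : ℂ, f ‖z‖ = 2 * π * ∫ x in Ioi (0 : ℝ), f x * x := by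
  rw [integral_fun_norm_addHaar volume f]
  simp [Complex.finrank_real_complex, Measure.real, mul_comm]
  ring

theorem integral_Ioi_exp_neg_mul_sq_sub_one_sub_log_sq_mul {t : ℝ} (ht : 0 < t) :
    ∫ x in Ioi (0 : ℝ), exp (-t * (x ^ 2 - 1 - log (x ^ 2))) * x =
      exp t * Gamma (t + 1) / (2 * t ^ (t + 1)) := by
  have hgamma_form : ∀ x ∈ Ioi (0 : ℝ), exp (-t * (x ^ 2 - 1 - log (x ^ 2))) * x =
      exp t * (x ^ (2 * t + 1) * exp (-t * x ^ (2 : ℝ))) := by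
    intro x (hx : 0 < x)
    rw [show -t * (x ^ 2 - 1 - log (x ^ 2)) = t + log (x ^ 2) * t + -t * x ^ 2 by ring,
      exp_add, exp_add, exp_mul, exp_log (by positivity), rpow_add hx, rpow_one, rpow_two,
      ← rpow_natCast, ← rpow_mul hx.le]
    push_cast
    ring
  rw [setIntegral_congr_fun measurableSet_Ioi hgamma_form, integral_const_mul,
    integral_rpow_mul_exp_neg_mul_rpow two_pos (by linarith) ht,
    show (2 * t + 1 + 1) / 2 = t + 1 by ring, show -(2 * t + 1 + 1) / 2 = -(t + 1) by ring,
    rpow_neg ht.le]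
  field_simp

theorem sqrt_mul_two_pi_mul_exp_mul_factorial_div_eq_stirlingSeq {n : ℕ} (hn : n ≠ 0) :
    √n * (2 * π * (exp n * n.factorial / (2 * n ^ (n + 1)))) =
      π * √2 * Stirling.stirlingSeq n := by
  have hn_pos : (0 : ℝ) < n := by positivity
  rw [Stirling.stirlingSeq, sqrt_mul zero_le_two, div_pow, exp_one_pow]
  field_simp
  rw [sq_sqrt hn_pos.le, pow_succ']

theorem stmt_16 :
    (∀ n : ℕ, 1 ≤ n →
      ∫ z : ℂ, Real.exp (-(n : ℝ) * (‖z‖ ^ 2 - 1 - Real.log (‖z‖ ^ 2))) =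
        2 * Real.pi *
          ∫ ρ in Set.Ioi (0 : ℝ), Real.exp (-(n : ℝ) * (ρ ^ 2 - 1 - Real.log (ρ ^ 2))) * ρ) ∧
    Tendsto (fun n : ℕ =>
        Real.sqrt n *
          ∫ z : ℂ, Real.exp (-(n : ℝ) * (‖z‖ ^ 2 - 1 - Real.log (‖z‖ ^ 2))))
      atTop (nhds (Real.pi * Real.sqrt (2 * Real.pi))) := by
  have hpolar (n : ℕ) :
      ∫ z : ℂ, exp (-(n : ℝ) * (‖z‖ ^ 2 - 1 - log (‖z‖ ^ 2))) =
        2 * π * ∫ ρ in Ioi (0 : ℝ), exp (-(n : ℝ) * (ρ ^ 2 - 1 - log (ρ ^ 2))) * ρ :=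
    Complex.integral_comp_norm fun ρ ↦ exp (-(n : ℝ) * (ρ ^ 2 - 1 - log (ρ ^ 2)))
  refine ⟨fun n _ ↦ hpolar n, ?_⟩
  have hstirling := Stirling.tendsto_stirlingSeq_sqrt_pi.const_mul (π * √2)
  rw [mul_assoc, ← sqrt_mul zero_le_two] at hstirling
  refine hstirling.congr' ?_
  filter_upwards [eventually_ne_atTop 0] with n hn
  rw [hpolar, integral_Ioi_exp_neg_mul_sq_sub_one_sub_log_sq_mul (by positivity),
    Gamma_nat_eq_factorial, ← Nat.cast_succ, rpow_natCast,
    sqrt_mul_two_pi_mul_exp_mul_factorial_div_eq_stirlingSeq hn]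
end

section
/- Let λ_1, …, λ_n ∈ ℂ, c > 0, and define f(x) = max_{j=1,…,n} (c/√n - |x - λ_j|)_+ for x ∈ ℂ, where (t)_+ = max(t,0). Let μ_n = (1/n)∑δ_{λ_j} and let μ_∞ be the uniform measure on the unit disk. Then f is 1-Lipschitz, f(λ_j) = c/√n for every j, so ∫ f dμ_n = (1/n)∑_j f(λ_j) = c/√n, and ∫_ℂ f dμ_∞ ≤ c³/(3√n). Consequently W_1(μ_n, μ_∞) ≥ c/√n - c³/(3√n), which is maximized at c = 1, giving W_1(μ_n, μ_∞) ≥ 1/√n − 1/(3√n) = 2/(3√n). -/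
open MeasureTheory
open scoped ENNReal NNReal

theorem stmt_19 (n : ℕ) (hn : 1 ≤ n) (l : Fin n → ℂ) (c : ℝ) (hc : 0 < c)
    (μn : Measure ℂ) (hμn : μn = (n : ENNReal)⁻¹ • ∑ j : Fin n, Measure.dirac (l j))
    (f : ℂ → ℝ)
    (hf : f = fun x => ⨆ j : Fin n, max (c / Real.sqrt n - ‖x - l j‖) 0) :
    LipschitzWith 1 f ∧
      (∫ x, f x ∂μn) = c / Real.sqrt n ∧
      (∫ x, f x ∂circularLaw) ≤ c ^ 3 / (3 * Real.sqrt n) ∧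
      wassersteinDist 1 μn circularLaw ≥
        ENNReal.ofReal (c / Real.sqrt n - c ^ 3 / (3 * Real.sqrt n)) := by
  haveI : Nonempty (Fin n) := Fin.pos_iff_nonempty.1 hn
  have hn0 : (n : ℝ) ≠ 0 := by positivity
  have hs : (0:ℝ) < Real.sqrt n := Real.sqrt_pos.2 (by positivity)
  set r : ℝ := c / Real.sqrt n with hr_def
  have hr : 0 < r := div_pos hc hs
  have hbdd : ∀ x : ℂ, BddAbove (Set.range fun j : Fin n =>
      max (r - ‖x - l j‖) 0) := fun x => Set.Finite.bddAbove (Set.finite_range _)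
  -- pointwise bounds
  have hub : ∀ x, f x ≤ r := by
    intro x; rw [hf]
    exact ciSup_le fun j => max_le (by simpa using (norm_nonneg _)) hr.le
  have hnn : ∀ x, 0 ≤ f x := by
    intro x; rw [hf]
    exact le_ciSup_of_le (hbdd x) (Classical.arbitrary _) (le_max_right _ _)
  have hfl : ∀ j, f (l j) = r := by
    intro j
    refine le_antisymm (hub _) ?_
    rw [hf]
    refine le_ciSup_of_le (hbdd _) j ?_
    simp [hr.le]
  -- Lipschitz
  have Lip : LipschitzWith 1 f := by
    apply LipschitzWith.of_dist_le_mul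
    intro x y
    rw [NNReal.coe_one, one_mul, Real.dist_eq, abs_sub_le_iff]
    have key : ∀ a b : ℂ, f a - f b ≤ dist a b := by
      intro a b
      have ha : f a = ⨆ j : Fin n, max (r - ‖a - l j‖) 0 := by rw [hf]
      have hb2 : f b = ⨆ j : Fin n, max (r - ‖b - l j‖) 0 := by rw [hf]
      rw [sub_le_iff_le_add', ha]
      refine ciSup_le fun j => ?_
      have h1 : r - ‖a - l j‖ ≤ (r - ‖b - l j‖) + dist a b := by
        have := dist_triangle a (l j) b
        simp only [Complex.dist_eq] at this ⊢
        have : ‖b - l j‖ ≤ ‖a - l j‖ + ‖a - b‖ := by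
          have hb : b - l j = (a - l j) - (a - b) := by ring
          calc ‖b - l j‖ = ‖(a - l j) - (a - b)‖ := by
                rw [hb]
            _ ≤ ‖a - l j‖ + ‖a - b‖ := norm_sub_le _ _
            _ = ‖a - l j‖ + ‖a - b‖ := by
                rfl
        linarith
      calc max (r - ‖a - l j‖) 0
          ≤ max ((r - ‖b - l j‖) + dist a b) (0 + dist a b) :=
            max_le_max h1 (by simpa using dist_nonneg)
        _ = max (r - ‖b - l j‖) 0 + dist a b := (max_add_add_right _ _ _)
        _ ≤ f b + dist a b := by
            gcongr
            rw [hb2]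
            exact le_ciSup (hbdd b) j
    exact ⟨by simpa [dist_comm] using key x y, by simpa [dist_comm x y] using key y x⟩
  have hcont : Continuous f := Lip.continuous
  have hmeas : StronglyMeasurable f := hcont.stronglyMeasurable
  -- integral against μn
  have h2 : (∫ x, f x ∂μn) = r := by
    have hint : ∀ j : Fin n, Integrable f (Measure.dirac (l j)) := by
      intro j
      refine ⟨hmeas.aestronglyMeasurable, ?_⟩
      rw [HasFiniteIntegral, lintegral_dirac]
      exact ENNReal.coe_lt_top
    rw [hμn, integral_smul_measure, integral_finset_sum_measure (fun j _ => hint j)]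
    have : ∀ j : Fin n, (∫ x, f x ∂Measure.dirac (l j)) = r := by
      intro j; rw [integral_dirac, hfl]
    simp only [this, Finset.sum_const, Finset.card_univ, Fintype.card_fin, nsmul_eq_mul,
      smul_eq_mul, ENNReal.toReal_inv, ENNReal.toReal_natCast]
    field_simp
  -- the value of the target bound
  have hval : (n : ℝ) * (r ^ 3 / 3) = c ^ 3 / (3 * Real.sqrt n) := by
    have hsq : Real.sqrt n ^ 2 = (n : ℝ) := Real.sq_sqrt (by positivity)
    have h3p : Real.sqrt n ^ 3 = (n : ℝ) * Real.sqrt n := by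
      rw [pow_succ, hsq]
    rw [hr_def]
    field_simp
    rw [hsq]
  -- integral against circularLaw
  have hpi : volume (Metric.closedBall (0 : ℂ) 1) = (NNReal.pi : ENNReal) := by
    simp [Complex.volume_closedBall]
  have hpi0 : (NNReal.pi : ENNReal) ≠ 0 := by
    simp [ENNReal.coe_ne_zero, NNReal.pi_ne_zero]
  have hpit : (NNReal.pi : ENNReal) ≠ ⊤ := ENNReal.coe_ne_top
  have h3 : (∫ x, f x ∂circularLaw) ≤ c ^ 3 / (3 * Real.sqrt n) := by
    have hset : ∀ t : ℝ, 0 < t → {a : ℂ | t < f a} ⊆ ⋃ j : Fin n, Metric.ball (l j) (r - t) := by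
      intro t ht a ha
      simp only [Set.mem_setOf_eq] at ha
      obtain ⟨j, hj⟩ := Finite.exists_max (fun j : Fin n => max (r - ‖a - l j‖) 0)
      have hfa : f a ≤ max (r - ‖a - l j‖) 0 := by
        rw [hf]; exact ciSup_le hj
      have h1 : t < max (r - ‖a - l j‖) 0 := lt_of_lt_of_le ha hfa
      have h2' : t < r - ‖a - l j‖ := by
        rcases max_cases (r - ‖a - l j‖) (0 : ℝ) with ⟨he, _⟩ | ⟨he, _⟩
        · rwa [he] at h1
        · rw [he] at h1; linarith
      refine Set.mem_iUnion.2 ⟨j, ?_⟩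
      rw [Metric.mem_ball, Complex.dist_eq]
      linarith
    have hmb : ∀ t ∈ Set.Ioc (0:ℝ) r, circularLaw {a : ℂ | t < f a}
        ≤ (n : ℝ≥0∞) * ENNReal.ofReal ((r - t) ^ 2) := by
      intro t ht
      have step1 : circularLaw {a : ℂ | t < f a}
          ≤ (NNReal.pi : ℝ≥0∞)⁻¹ * ∑ j : Fin n, volume (Metric.ball (l j) (r - t)) := by
        rw [circularLaw, hpi]
        simp only [Measure.smul_apply, smul_eq_mul]
        gcongr
        calc (volume.restrict (Metric.closedBall (0:ℂ) 1)) {a : ℂ | t < f a}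
            ≤ volume {a : ℂ | t < f a} := Measure.restrict_le_self _
          _ ≤ volume (⋃ j : Fin n, Metric.ball (l j) (r - t)) := measure_mono (hset t ht.1)
          _ ≤ ∑ j : Fin n, volume (Metric.ball (l j) (r - t)) := measure_iUnion_fintype_le _ _
      refine step1.trans ?_
      refine le_of_eq ?_
      simp only [Complex.volume_ball, Finset.sum_const, Finset.card_univ, Fintype.card_fin,
        nsmul_eq_mul]
      calc (NNReal.pi : ℝ≥0∞)⁻¹ * ((n : ℝ≥0∞) * (ENNReal.ofReal (r - t) ^ 2 * NNReal.pi))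
          = ((NNReal.pi : ℝ≥0∞)⁻¹ * NNReal.pi) * ((n : ℝ≥0∞) * ENNReal.ofReal (r - t) ^ 2) := by
            ring
        _ = (n : ℝ≥0∞) * ENNReal.ofReal ((r - t) ^ 2) := by
            rw [ENNReal.inv_mul_cancel hpi0 hpit, one_mul, ENNReal.ofReal_pow (by linarith [ht.2])]
    have hInt : ∫ x, f x ∂circularLaw = (∫⁻ x, ENNReal.ofReal (f x) ∂circularLaw).toReal :=
      integral_eq_lintegral_of_nonneg_ae (ae_of_all _ hnn) hmeas.aestronglyMeasurable
    rw [hInt]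
    refine ENNReal.toReal_le_of_le_ofReal (by positivity) ?_
    rw [lintegral_eq_lintegral_meas_lt circularLaw (ae_of_all _ hnn) hcont.aemeasurable]
    rw [← Set.Ioc_union_Ioi_eq_Ioi hr.le]
    refine (lintegral_union_le _ _ _).trans ?_
    have hzero : ∫⁻ t in Set.Ioi r, circularLaw {a : ℂ | t < f a} = 0 := by
      have hz : ∀ t ∈ Set.Ioi r, circularLaw {a : ℂ | t < f a} = (fun _ : ℝ => (0:ℝ≥0∞)) t := by
        intro t ht
        have : {a : ℂ | t < f a} = ∅ := by
          ext a
          simp only [Set.mem_setOf_eq, Set.mem_empty_iff_false, iff_false, not_lt]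
          exact (hub a).trans (le_of_lt ht)
        simp [this]
      rw [setLIntegral_congr_fun measurableSet_Ioi hz, lintegral_zero]
    rw [hzero, add_zero]
    have hb1 : ∫⁻ t in Set.Ioc 0 r, circularLaw {a : ℂ | t < f a}
        ≤ ∫⁻ t in Set.Ioc 0 r, (n : ℝ≥0∞) * ENNReal.ofReal ((r - t) ^ 2) := by
      refine setLIntegral_mono ?_ hmb
      exact measurable_const.mul (ENNReal.measurable_ofReal.comp
        ((measurable_const.sub measurable_id).pow_const 2))
    refine hb1.trans ?_
    have hm2 : Measurable fun t : ℝ => ENNReal.ofReal ((r - t) ^ 2) := by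
      exact ENNReal.measurable_ofReal.comp ((measurable_const.sub measurable_id).pow_const 2)
    rw [lintegral_const_mul _ hm2]
    have hcomp : ∫⁻ t in Set.Ioc 0 r, ENNReal.ofReal ((r - t) ^ 2) = ENNReal.ofReal (r ^ 3 / 3) := by
      have hint2 : IntegrableOn (fun t : ℝ => (r - t) ^ 2) (Set.Ioc 0 r) := by
        apply Continuous.integrableOn_Ioc
        fun_prop
      rw [← ofReal_integral_eq_lintegral_ofReal hint2 (ae_of_all _ fun t => sq_nonneg _)]
      congr 1
      rw [← intervalIntegral.integral_of_le hr.le]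
      have hcs := intervalIntegral.integral_comp_sub_left (a := (0:ℝ)) (b := r)
        (fun x => x ^ 2) r
      simp only [sub_zero, sub_self] at hcs
      rw [hcs, integral_pow]
      norm_num
    rw [hcomp, ← ENNReal.ofReal_natCast n, ← ENNReal.ofReal_mul (by positivity), hval]
  refine ⟨Lip, h2, h3, ?_⟩
  -- Wasserstein bound
  rw [wassersteinDist, ge_iff_le, le_iInf_iff]
  rintro ⟨q, hq1, hq2⟩
  simp only [one_div_one, ENNReal.rpow_one]
  haveI hq_prob : IsProbabilityMeasure q := by
    constructor
    have h1 : q Set.univ = μn Set.univ := by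
      rw [← hq1, Measure.map_apply measurable_fst MeasurableSet.univ]
      rfl
    rw [h1, hμn, Measure.smul_apply, Measure.finset_sum_apply]
    simp only [measure_univ, Finset.sum_const, Finset.card_univ, Fintype.card_fin,
      nsmul_eq_mul, mul_one, smul_eq_mul]
    exact ENNReal.inv_mul_cancel (by exact_mod_cast Nat.cast_ne_zero.2 (by omega))
      (ENNReal.natCast_ne_top n)
  have hi1 : Integrable (fun x : ℂ × ℂ => f x.1) q := by
    refine Integrable.mono' (integrable_const r)
      ((hcont.comp continuous_fst).aestronglyMeasurable) (ae_of_all _ fun x => ?_)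
    rw [Real.norm_eq_abs, abs_of_nonneg (hnn _)]
    exact hub _
  have hi2 : Integrable (fun x : ℂ × ℂ => f x.2) q := by
    refine Integrable.mono' (integrable_const r)
      ((hcont.comp continuous_snd).aestronglyMeasurable) (ae_of_all _ fun x => ?_)
    rw [Real.norm_eq_abs, abs_of_nonneg (hnn _)]
    exact hub _
  have hig : Integrable (fun x : ℂ × ℂ => f x.1 - f x.2) q := hi1.sub hi2
  have hmap1 : ∫ x : ℂ × ℂ, f x.1 ∂q = ∫ x, f x ∂μn := by
    rw [← hq1, integral_map measurable_fst.aemeasurable hmeas.aestronglyMeasurable]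
  have hmap2 : ∫ x : ℂ × ℂ, f x.2 ∂q = ∫ x, f x ∂circularLaw := by
    rw [← hq2, integral_map measurable_snd.aemeasurable hmeas.aestronglyMeasurable]
  calc ENNReal.ofReal (r - c ^ 3 / (3 * Real.sqrt n))
      ≤ ENNReal.ofReal (∫ x : ℂ × ℂ, (f x.1 - f x.2) ∂q) := by
        apply ENNReal.ofReal_le_ofReal
        rw [integral_sub hi1 hi2, hmap1, hmap2, h2]
        linarith [h3]
    _ ≤ ENNReal.ofReal (∫ x : ℂ × ℂ, max (f x.1 - f x.2) 0 ∂q) :=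
        ENNReal.ofReal_le_ofReal
          (integral_mono hig hig.pos_part fun x => le_max_left _ _)
    _ = ∫⁻ x : ℂ × ℂ, ENNReal.ofReal (max (f x.1 - f x.2) 0) ∂q :=
        ofReal_integral_eq_lintegral_ofReal hig.pos_part
          (ae_of_all _ fun x => le_max_right _ _)
    _ = ∫⁻ x : ℂ × ℂ, ENNReal.ofReal (f x.1 - f x.2) ∂q := by
        refine lintegral_congr fun x => ?_
        rcases le_total (f x.1 - f x.2) 0 with h | h
        · rw [max_eq_right h, ENNReal.ofReal_of_nonpos h, ENNReal.ofReal_zero]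
        · rw [max_eq_left h]
    _ ≤ ∫⁻ x : ℂ × ℂ, ENNReal.ofReal (‖x.1 - x.2‖) ∂q := by
        refine lintegral_mono fun x => ENNReal.ofReal_le_ofReal ?_
        have hd := Lip.dist_le_mul x.1 x.2
        rw [NNReal.coe_one, one_mul, Complex.dist_eq] at hd
        calc f x.1 - f x.2 ≤ |f x.1 - f x.2| := le_abs_self _
          _ = dist (f x.1) (f x.2) := (Real.dist_eq _ _).symm
          _ ≤ ‖x.1 - x.2‖ := hd
end
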